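/- arXiv:0708.3107 — 2 statements merged into one kernel-verified Lean document; each statement's English description precedes it below -/
import Mathlib

section
/- Anderson's integral for n = 3: for reals x_1 < x_2 < x_3 and α_1, α_2, α_3 > 0, ∫∫_{x_1<y_1<x_2<y_2<x_3} (y_2-y_1) ∏_{i=1}^{2} ∏_{j=1}^{3} |y_i - x_j|^{α_j - 1} dy_1 dy_2 = [Γ(α_1)Γ(α_2)Γ(α_3)/Γ(α_1+α_2+α_3)] (x_2-x_1)^{α_1+α_2-1}(x_3-x_1)^{α_1+α_3-1}(x_3-x_2)^{α_2+α_3-1}. -/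
/-!
For `y₁ < y₂` put `P(t) = (t - y₁)(t - y₂)` and `Q(t) = (t - x₁)(t - x₂)(t - x₃)`. The numbers
`uⱼ = |P(xⱼ) / Q'(xⱼ)|` are the absolute values of the partial-fraction coefficients of `P / Q`;
as `P` is monic of degree `deg Q - 1` they sum to `1`. Hence `y ↦ (u₁, u₂)` maps the region
`x₁ < y₁ < x₂ < y₂ < x₃` bijectively onto the open simplex (the inverse takes the roots of the monic
quadratic with the prescribed values at `x₁`, `x₂`), its Jacobian is `(y₂ - y₁) / ∏ (xⱼ - xᵢ)`, and
`∏ uⱼ ^ (αⱼ - 1)` is the rest of the integrand up to a constant. The integral thus becomes a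
constant times the Dirichlet integral `∫ u₁ ^ (α₁ - 1) u₂ ^ (α₂ - 1) (1 - u₁ - u₂) ^ (α₃ - 1)`
over the simplex, which `(s, t) ↦ (s, (1 - s) t)` turns into a product of two beta integrals.
-/

open MeasureTheory Set

lemma ofReal_rpow_mul_one_sub_rpow {a b x : ℝ} (hx : x ∈ Icc (0:ℝ) 1) :
    ((x ^ (a - 1) * (1 - x) ^ (b - 1) : ℝ) : ℂ) =
      (x : ℂ) ^ ((a : ℂ) - 1) * (1 - (x : ℂ)) ^ ((b : ℂ) - 1) := by
  rw [Complex.ofReal_mul, Complex.ofReal_cpow hx.1, Complex.ofReal_cpow (sub_nonneg.2 hx.2)]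
  push_cast
  rfl

lemma integrableOn_rpow_mul_one_sub_rpow {a b : ℝ} (ha : 0 < a) (hb : 0 < b) :
    IntegrableOn (fun x : ℝ => x ^ (a - 1) * (1 - x) ^ (b - 1)) (Ioo 0 1) := by
  have h := (Complex.betaIntegral_convergent (u := a) (v := b) (by simpa) (by simpa)).congr
    fun x hx => (ofReal_rpow_mul_one_sub_rpow (Ioc_subset_Icc_self (by simpa using hx))).symm
  simpa [IntegrableOn] using ((intervalIntegrable_iff_integrableOn_Ioo_of_le zero_le_one).1 h).re

lemma integral_rpow_mul_one_sub_rpow {a b : ℝ} (ha : 0 < a) (hb : 0 < b) :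
    ∫ x in Ioo 0 1, x ^ (a - 1) * (1 - x) ^ (b - 1) =
      Real.Gamma a * Real.Gamma b / Real.Gamma (a + b) := by
  have h := Complex.betaIntegral_eq_Gamma_mul_div a b (by simpa) (by simpa)
  rw [Complex.betaIntegral, ← intervalIntegral.integral_congr
      fun x hx => ofReal_rpow_mul_one_sub_rpow (a := a) (b := b) (by simpa using hx),
    intervalIntegral.integral_ofReal, intervalIntegral.integral_of_le zero_le_one,
    integral_Ioc_eq_integral_Ioo] at h
  apply Complex.ofReal_injective
  rw [h]
  push_cast [← Complex.Gamma_ofReal]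
  rfl

lemma rpow_add_add_sub_one {a : ℝ} (ha : 0 < a) (p q : ℝ) :
    a ^ (p + q - 1) = a * a ^ (p - 1) * a ^ (q - 1) := by
  rw [show p + q - 1 = 1 + (p - 1) + (q - 1) by ring, Real.rpow_add ha, Real.rpow_add ha,
    Real.rpow_one]

lemma intervalIntegral_intervalIntegral_eq_setIntegral_prod {E : Type*} [NormedAddCommGroup E]
    [NormedSpace ℝ E] {f : ℝ → ℝ → E} {a b c d : ℝ} (hab : a ≤ b) (hcd : c ≤ d)
    (hf : IntegrableOn (Function.uncurry f) (Ioo a b ×ˢ Ioo c d)) :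
    ∫ x in a..b, ∫ y in c..d, f x y = ∫ z in Ioo a b ×ˢ Ioo c d, f z.1 z.2 := by
  rw [Measure.volume_eq_prod] at hf ⊢
  simp_rw [setIntegral_prod (fun z => f z.1 z.2) hf, intervalIntegral.integral_of_le hab, intervalIntegral.integral_of_le hcd,
    integral_Ioc_eq_integral_Ioo]

noncomputable def Matrix.toCLM₂ (A : Matrix (Fin 2) (Fin 2) ℝ) : ℝ × ℝ →L[ℝ] ℝ × ℝ :=
  LinearMap.toContinuousLinearMap
    (Matrix.toLin (Module.Basis.finTwoProd ℝ) (Module.Basis.finTwoProd ℝ) A)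

lemma Matrix.toCLM₂_apply (a b c d : ℝ) (v : ℝ × ℝ) :
    Matrix.toCLM₂ !![a, b; c, d] v = (a * v.1 + b * v.2, c * v.1 + d * v.2) := by
  simp [Matrix.toCLM₂, Matrix.toLin_apply, Matrix.mulVec, dotProduct, Fin.sum_univ_two]

lemma Matrix.det_toCLM₂ (A : Matrix (Fin 2) (Fin 2) ℝ) : A.toCLM₂.det = A.det :=
  LinearMap.det_toLin _ A

section ChangeOfVariables

variable {E : Type*} [NormedAddCommGroup E] [NormedSpace ℝ E] [FiniteDimensional ℝ E]
  [MeasurableSpace E] [BorelSpace E] {μ : Measure E} [μ.IsAddHaarMeasure]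

lemma integrableOn_iff_of_jacobian {s t : Set E} {f : E → E} {f' : E → E →L[ℝ] E}
    {g h : E → ℝ} (hs : MeasurableSet s) (hf' : ∀ x ∈ s, HasFDerivWithinAt f (f' x) s x)
    (hf : InjOn f s) (hfs : f '' s = t) (hgh : ∀ x ∈ s, |(f' x).det| * g (f x) = h x) :
    IntegrableOn g t μ ↔ IntegrableOn h s μ := by
  rw [← hfs, integrableOn_image_iff_integrableOn_abs_det_fderiv_smul μ hs hf' hf g]
  exact integrableOn_congr_fun hgh hs

lemma setIntegral_eq_of_jacobian {s t : Set E} {f : E → E} {f' : E → E →L[ℝ] E}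
    {g h : E → ℝ} (hs : MeasurableSet s) (hf' : ∀ x ∈ s, HasFDerivWithinAt f (f' x) s x)
    (hf : InjOn f s) (hfs : f '' s = t) (hgh : ∀ x ∈ s, |(f' x).det| * g (f x) = h x) :
    ∫ x in t, g x ∂μ = ∫ x in s, h x ∂μ := by
  rw [← hfs, integral_image_eq_integral_abs_det_fderiv_smul μ hs hf' hf g]
  exact setIntegral_congr_fun hs hgh

end ChangeOfVariables

def openSimplex : Set (ℝ × ℝ) := {u | 0 < u.1 ∧ 0 < u.2 ∧ u.1 + u.2 < 1}

noncomputable def dirichletDensity (a b c : ℝ) (u : ℝ × ℝ) : ℝ :=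
  u.1 ^ (a - 1) * u.2 ^ (b - 1) * (1 - u.1 - u.2) ^ (c - 1)

def squareToSimplex (p : ℝ × ℝ) : ℝ × ℝ := (p.1, (1 - p.1) * p.2)

lemma hasFDerivAt_squareToSimplex (p : ℝ × ℝ) :
    HasFDerivAt squareToSimplex (Matrix.toCLM₂ !![1, 0; -p.2, 1 - p.1]) p := by
  have h := (hasFDerivAt_fst (p := p) (𝕜 := ℝ)).prodMk
    (((hasFDerivAt_fst (p := p) (𝕜 := ℝ)).const_sub 1).mul (hasFDerivAt_snd (p := p)))
  refine h.congr_fderiv (ContinuousLinearMap.ext fun v => ?_)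
  simp [Matrix.toCLM₂_apply]
  ring

lemma injOn_squareToSimplex : InjOn squareToSimplex (Ioo 0 1 ×ˢ Ioo 0 1) := by
  rintro ⟨s, t⟩ ⟨hs, -⟩ ⟨s', t'⟩ - h
  simp only [squareToSimplex, Prod.mk.injEq] at h
  obtain ⟨rfl, h⟩ := h
  have : 1 - s ≠ 0 := by linarith [hs.2]
  simp [mul_left_cancel₀ this h]

lemma image_squareToSimplex : squareToSimplex '' (Ioo 0 1 ×ˢ Ioo 0 1) = openSimplex := by
  ext ⟨u₁, u₂⟩
  simp only [mem_image, Prod.exists, mem_prod, mem_Ioo, squareToSimplex, Prod.mk.injEq,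
    openSimplex]
  constructor
  · rintro ⟨s, t, ⟨⟨hs₀, hs₁⟩, ht₀, ht₁⟩, rfl, rfl⟩
    exact ⟨hs₀, by nlinarith, by nlinarith⟩
  · rintro ⟨h₁, h₂, h₁₂⟩
    have : 0 < 1 - u₁ := by linarith
    exact ⟨u₁, u₂ / (1 - u₁),
      ⟨⟨h₁, by linarith⟩, by positivity, (div_lt_one this).2 (by linarith)⟩, rfl, by field_simp⟩

lemma abs_det_mul_dirichletDensity_squareToSimplex (a b c : ℝ) {p : ℝ × ℝ}
    (hp : p ∈ Ioo (0:ℝ) 1 ×ˢ Ioo (0:ℝ) 1) :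
    |(Matrix.toCLM₂ !![1, 0; -p.2, 1 - p.1]).det| * dirichletDensity a b c (squareToSimplex p) =
      p.1 ^ (a - 1) * (1 - p.1) ^ (b + c - 1) * (p.2 ^ (b - 1) * (1 - p.2) ^ (c - 1)) := by
  obtain ⟨hs, ht⟩ := hp
  have hs' : 0 < 1 - p.1 := by linarith [hs.2]
  have ht' : 0 < 1 - p.2 := by linarith [ht.2]
  rw [Matrix.det_toCLM₂, Matrix.det_fin_two_of, dirichletDensity, squareToSimplex]
  dsimp only
  rw [one_mul, zero_mul, sub_zero, abs_of_pos hs',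
    show 1 - p.1 - (1 - p.1) * p.2 = (1 - p.1) * (1 - p.2) by ring,
    Real.mul_rpow hs'.le ht.1.le, Real.mul_rpow hs'.le ht'.le, rpow_add_add_sub_one hs']
  ring

lemma integrableOn_and_integral_dirichletDensity {a b c : ℝ} (ha : 0 < a) (hb : 0 < b)
    (hc : 0 < c) :
    IntegrableOn (dirichletDensity a b c) openSimplex ∧
      ∫ u in openSimplex, dirichletDensity a b c u =
        Real.Gamma a * Real.Gamma b * Real.Gamma c / Real.Gamma (a + b + c) := by
  have hbc : 0 < b + c := add_pos hb hc
  have hsq : MeasurableSet (Ioo (0:ℝ) 1 ×ˢ Ioo (0:ℝ) 1) := measurableSet_Ioo.prod measurableSet_Ioo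
  have hderiv : ∀ p ∈ Ioo (0:ℝ) 1 ×ˢ Ioo (0:ℝ) 1, HasFDerivWithinAt squareToSimplex
      (Matrix.toCLM₂ !![1, 0; -p.2, 1 - p.1]) (Ioo 0 1 ×ˢ Ioo 0 1) p :=
    fun p _ => (hasFDerivAt_squareToSimplex p).hasFDerivWithinAt
  have hpull := fun p (hp : p ∈ Ioo (0:ℝ) 1 ×ˢ Ioo (0:ℝ) 1) =>
    abs_det_mul_dirichletDensity_squareToSimplex a b c hp
  have hprod := (integrableOn_rpow_mul_one_sub_rpow ha hbc).mul_prod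
    (integrableOn_rpow_mul_one_sub_rpow hb hc)
  rw [Measure.prod_restrict, ← Measure.volume_eq_prod] at hprod
  refine ⟨(integrableOn_iff_of_jacobian hsq hderiv injOn_squareToSimplex image_squareToSimplex
    hpull).2 hprod, ?_⟩
  rw [setIntegral_eq_of_jacobian hsq hderiv injOn_squareToSimplex image_squareToSimplex hpull,
    Measure.volume_eq_prod, setIntegral_prod_mul (fun s : ℝ => s ^ (a - 1) * (1 - s) ^ (b + c - 1))
      (fun t : ℝ => t ^ (b - 1) * (1 - t) ^ (c - 1)), integral_rpow_mul_one_sub_rpow ha hbc,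
    integral_rpow_mul_one_sub_rpow hb hc, ← add_assoc]
  have := (Real.Gamma_pos_of_pos hbc).ne'
  field_simp

lemma exists_roots_of_quadratic_neg {b c x : ℝ} (h : x ^ 2 + b * x + c < 0) :
    ∃ y₁ y₂, y₁ < x ∧ x < y₂ ∧ ∀ t, t ^ 2 + b * t + c = (t - y₁) * (t - y₂) := by
  have hD : (2 * x + b) ^ 2 < b ^ 2 - 4 * c := by nlinarith
  have hlt := abs_lt.1 (Real.lt_sqrt_of_sq_lt (by rwa [sq_abs] : |2 * x + b| ^ 2 < _))
  have hsq := Real.sq_sqrt (show 0 ≤ b ^ 2 - 4 * c by nlinarith [sq_nonneg (2 * x + b)])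
  refine ⟨(-b - √(b ^ 2 - 4 * c)) / 2, (-b + √(b ^ 2 - 4 * c)) / 2, by linarith, by linarith,
    fun t => by linear_combination (1/4 : ℝ) * hsq⟩

section AndersonMap

variable {x₁ x₂ x₃ : ℝ}

noncomputable def andersonMap (x₁ x₂ x₃ : ℝ) (y : ℝ × ℝ) : ℝ × ℝ :=
  ((y.1 - x₁) * (y.2 - x₁) / ((x₂ - x₁) * (x₃ - x₁)),
    (x₂ - y.1) * (y.2 - x₂) / ((x₂ - x₁) * (x₃ - x₂)))

noncomputable def andersonJacobian (x₁ x₂ x₃ : ℝ) (y : ℝ × ℝ) : Matrix (Fin 2) (Fin 2) ℝ :=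
  !![(y.2 - x₁) / ((x₂ - x₁) * (x₃ - x₁)), (y.1 - x₁) / ((x₂ - x₁) * (x₃ - x₁));
    -(y.2 - x₂) / ((x₂ - x₁) * (x₃ - x₂)), (x₂ - y.1) / ((x₂ - x₁) * (x₃ - x₂))]

lemma hasFDerivAt_andersonMap (x₁ x₂ x₃ : ℝ) (y : ℝ × ℝ) :
    HasFDerivAt (andersonMap x₁ x₂ x₃) (andersonJacobian x₁ x₂ x₃ y).toCLM₂ y := by
  have h₁ := (((hasFDerivAt_fst (p := y) (𝕜 := ℝ)).sub_const x₁).mul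
    ((hasFDerivAt_snd (p := y)).sub_const x₁)).mul_const ((x₂ - x₁) * (x₃ - x₁))⁻¹
  have h₂ := (((hasFDerivAt_fst (p := y) (𝕜 := ℝ)).const_sub x₂).mul
    ((hasFDerivAt_snd (p := y)).sub_const x₂)).mul_const ((x₂ - x₁) * (x₃ - x₂))⁻¹
  refine (h₁.prodMk h₂).congr_fderiv (ContinuousLinearMap.ext fun v => ?_)
  simp only [andersonJacobian, Matrix.toCLM₂_apply, div_eq_mul_inv]
  generalize ((x₂ - x₁) * (x₃ - x₁))⁻¹ = c₁
  generalize ((x₂ - x₁) * (x₃ - x₂))⁻¹ = c₂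
  simp
  constructor <;> ring

lemma det_andersonJacobian (h12 : x₁ < x₂) (h23 : x₂ < x₃) (y : ℝ × ℝ) :
    (andersonJacobian x₁ x₂ x₃ y).det = (y.2 - y.1) / ((x₂ - x₁) * (x₃ - x₁) * (x₃ - x₂)) := by
  have : x₂ - x₁ ≠ 0 := by linarith
  have : x₃ - x₁ ≠ 0 := by linarith
  have : x₃ - x₂ ≠ 0 := by linarith
  rw [andersonJacobian, Matrix.det_fin_two_of]
  field_simp
  ring

lemma one_sub_andersonMap (h12 : x₁ < x₂) (h23 : x₂ < x₃) (y : ℝ × ℝ) :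
    1 - (andersonMap x₁ x₂ x₃ y).1 - (andersonMap x₁ x₂ x₃ y).2 =
      (x₃ - y.1) * (x₃ - y.2) / ((x₃ - x₁) * (x₃ - x₂)) := by
  have : x₂ - x₁ ≠ 0 := by linarith
  have : x₃ - x₁ ≠ 0 := by linarith
  have : x₃ - x₂ ≠ 0 := by linarith
  rw [andersonMap]
  field_simp
  ring

lemma injOn_andersonMap (h12 : x₁ < x₂) (h23 : x₂ < x₃) :
    InjOn (andersonMap x₁ x₂ x₃) (Ioo x₁ x₂ ×ˢ Ioo x₂ x₃) := by
  rintro ⟨y₁, y₂⟩ ⟨⟨-, hy₁⟩, hy₂, -⟩ ⟨z₁, z₂⟩ ⟨⟨-, hz₁⟩, hz₂, -⟩ h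
  have : x₂ - x₁ ≠ 0 := by linarith
  have : x₃ - x₁ ≠ 0 := by linarith
  have : x₃ - x₂ ≠ 0 := by linarith
  simp only [andersonMap, Prod.mk.injEq] at h
  obtain ⟨e₁, e₂⟩ := h
  field_simp at e₁ e₂
  have hsum : y₁ + y₂ = z₁ + z₂ := by
    apply mul_left_cancel₀ (sub_ne_zero.2 h12.ne')
    linear_combination e₁ + e₂
  have hprod : y₁ * y₂ = z₁ * z₂ := by linear_combination e₁ + x₁ * hsum
  have hroot : (z₁ - y₁) * (z₁ - y₂) = 0 := by linear_combination (-z₁) * hsum + hprod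
  obtain rfl : z₁ = y₁ := by rcases mul_eq_zero.1 hroot with h | h <;> linarith
  simp only [Prod.mk.injEq, true_and]
  linarith

lemma mapsTo_andersonMap (h12 : x₁ < x₂) (h23 : x₂ < x₃) :
    MapsTo (andersonMap x₁ x₂ x₃) (Ioo x₁ x₂ ×ˢ Ioo x₂ x₃) openSimplex := by
  rintro ⟨y₁, y₂⟩ ⟨⟨h₁, h₂⟩, h₃, h₄⟩
  dsimp only at h₁ h₂ h₃ h₄
  have hu₃ : 0 < 1 - (andersonMap x₁ x₂ x₃ (y₁, y₂)).1 - (andersonMap x₁ x₂ x₃ (y₁, y₂)).2 := by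
    rw [one_sub_andersonMap h12 h23]
    exact div_pos (mul_pos (by linarith) (by linarith)) (mul_pos (by linarith) (by linarith))
  refine ⟨div_pos (mul_pos (by linarith) (by linarith)) (mul_pos (by linarith) (by linarith)),
    div_pos (mul_pos (by linarith) (by linarith)) (mul_pos (by linarith) (by linarith)),
    by linarith⟩

lemma surjOn_andersonMap (h12 : x₁ < x₂) (h23 : x₂ < x₃) :
    SurjOn (andersonMap x₁ x₂ x₃) (Ioo x₁ x₂ ×ˢ Ioo x₂ x₃) openSimplex := by
  rintro ⟨u₁, u₂⟩ ⟨hu₁, hu₂, hu⟩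
  -- `t ^ 2 + b t + c = (t - x₁) (t - x₂) - (x₃ - x₁) u₁ (t - x₂) - (x₃ - x₂) u₂ (t - x₁)`;
  -- its roots are the preimage of `u`
  set b := -(x₁ + x₂) - (x₃ - x₁) * u₁ - (x₃ - x₂) * u₂
  set c := x₁ * x₂ + (x₃ - x₁) * u₁ * x₂ + (x₃ - x₂) * u₂ * x₁
  have hneg : x₂ ^ 2 + b * x₂ + c < 0 := by
    have : 0 < (x₃ - x₂) * u₂ * (x₂ - x₁) := by
      have := sub_pos.2 h12; have := sub_pos.2 h23; positivity
    linear_combination this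
  obtain ⟨y₁, y₂, hy₁, hy₂, hq⟩ := exists_roots_of_quadratic_neg hneg
  have e₁ : (y₁ - x₁) * (y₂ - x₁) = (x₂ - x₁) * (x₃ - x₁) * u₁ := by
    linear_combination -(hq x₁)
  have e₂ : (x₂ - y₁) * (y₂ - x₂) = (x₂ - x₁) * (x₃ - x₂) * u₂ := by
    linear_combination hq x₂
  have e₃ : (x₃ - y₁) * (x₃ - y₂) = (x₃ - x₁) * (x₃ - x₂) * (1 - u₁ - u₂) := by
    linear_combination -(hq x₃)
  have : 0 < (x₂ - x₁) * (x₃ - x₁) * u₁ := by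
    have := sub_pos.2 h12; have := sub_pos.2 (h12.trans h23); positivity
  have : 0 < (x₃ - x₁) * (x₃ - x₂) * (1 - u₁ - u₂) := by
    have := sub_pos.2 h23; have := sub_pos.2 (h12.trans h23); have : 0 < 1 - u₁ - u₂ := by linarith
    positivity
  refine ⟨(y₁, y₂), ⟨⟨by nlinarith, hy₁⟩, hy₂, by nlinarith⟩, ?_⟩
  have : x₂ - x₁ ≠ 0 := by linarith
  have : x₃ - x₁ ≠ 0 := by linarith
  have : x₃ - x₂ ≠ 0 := by linarith
  simp only [andersonMap, e₁, e₂, Prod.mk.injEq]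
  constructor <;> field_simp

lemma image_andersonMap (h12 : x₁ < x₂) (h23 : x₂ < x₃) :
    andersonMap x₁ x₂ x₃ '' (Ioo x₁ x₂ ×ˢ Ioo x₂ x₃) = openSimplex :=
  (mapsTo_andersonMap h12 h23).image_subset.antisymm (surjOn_andersonMap h12 h23)

lemma abs_det_mul_dirichletDensity_andersonMap (h12 : x₁ < x₂) (h23 : x₂ < x₃) (α₁ α₂ α₃ : ℝ)
    {y : ℝ × ℝ} (hy : y ∈ Ioo x₁ x₂ ×ˢ Ioo x₂ x₃) :
    |(andersonJacobian x₁ x₂ x₃ y).toCLM₂.det| *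
        ((x₂ - x₁) ^ (α₁ + α₂ - 1) * (x₃ - x₁) ^ (α₁ + α₃ - 1) * (x₃ - x₂) ^ (α₂ + α₃ - 1) *
          dirichletDensity α₁ α₂ α₃ (andersonMap x₁ x₂ x₃ y)) =
      (y.2 - y.1) *
        (|y.1 - x₁| ^ (α₁ - 1) * |y.1 - x₂| ^ (α₂ - 1) * |y.1 - x₃| ^ (α₃ - 1)) *
        (|y.2 - x₁| ^ (α₁ - 1) * |y.2 - x₂| ^ (α₂ - 1) * |y.2 - x₃| ^ (α₃ - 1)) := by
  obtain ⟨⟨h₁, h₂⟩, h₃, h₄⟩ := hy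
  have d₁₂ : 0 < x₂ - x₁ := by linarith
  have d₁₃ : 0 < x₃ - x₁ := by linarith
  have d₂₃ : 0 < x₃ - x₂ := by linarith
  have p₁ : 0 < y.1 - x₁ := by linarith
  have p₂ : 0 < x₂ - y.1 := by linarith
  have p₃ : 0 < x₃ - y.1 := by linarith
  have q₁ : 0 < y.2 - x₁ := by linarith
  have q₂ : 0 < y.2 - x₂ := by linarith
  have q₃ : 0 < x₃ - y.2 := by linarith
  rw [dirichletDensity, one_sub_andersonMap h12 h23, Matrix.det_toCLM₂,
    det_andersonJacobian h12 h23,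
    abs_of_pos (div_pos (by linarith) (by positivity)), abs_of_pos p₁, abs_sub_comm,
    abs_of_pos p₂, abs_sub_comm, abs_of_pos p₃, abs_of_pos q₁, abs_of_pos q₂, abs_sub_comm,
    abs_of_pos q₃, andersonMap]
  dsimp only
  rw [Real.div_rpow (by positivity) (by positivity), Real.div_rpow (by positivity) (by positivity),
    Real.div_rpow (by positivity) (by positivity), Real.mul_rpow p₁.le q₁.le,
    Real.mul_rpow p₂.le q₂.le, Real.mul_rpow p₃.le q₃.le, Real.mul_rpow d₁₂.le d₁₃.le,
    Real.mul_rpow d₁₂.le d₂₃.le, Real.mul_rpow d₁₃.le d₂₃.le, rpow_add_add_sub_one d₁₂,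
    rpow_add_add_sub_one d₁₃, rpow_add_add_sub_one d₂₃]
  field_simp

end AndersonMap

/-- Anderson's integral for `n = 3`. -/
theorem anderson_n3 (x₁ x₂ x₃ α₁ α₂ α₃ : ℝ)
    (h12 : x₁ < x₂) (h23 : x₂ < x₃)
    (hα₁ : 0 < α₁) (hα₂ : 0 < α₂) (hα₃ : 0 < α₃) :
    ∫ y₁ in x₁..x₂, ∫ y₂ in x₂..x₃,
        (y₂ - y₁) *
          (|y₁ - x₁| ^ (α₁ - 1) * |y₁ - x₂| ^ (α₂ - 1) * |y₁ - x₃| ^ (α₃ - 1)) *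
          (|y₂ - x₁| ^ (α₁ - 1) * |y₂ - x₂| ^ (α₂ - 1) * |y₂ - x₃| ^ (α₃ - 1)) =
      Real.Gamma α₁ * Real.Gamma α₂ * Real.Gamma α₃ /
          Real.Gamma (α₁ + α₂ + α₃) *
        ((x₂ - x₁) ^ (α₁ + α₂ - 1) * (x₃ - x₁) ^ (α₁ + α₃ - 1) *
          (x₃ - x₂) ^ (α₂ + α₃ - 1)) := by
  have hS : MeasurableSet (Ioo x₁ x₂ ×ˢ Ioo x₂ x₃) := measurableSet_Ioo.prod measurableSet_Ioo
  have hderiv : ∀ y ∈ Ioo x₁ x₂ ×ˢ Ioo x₂ x₃, HasFDerivWithinAt (andersonMap x₁ x₂ x₃)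
      (andersonJacobian x₁ x₂ x₃ y).toCLM₂ (Ioo x₁ x₂ ×ˢ Ioo x₂ x₃) y :=
    fun y _ => (hasFDerivAt_andersonMap x₁ x₂ x₃ y).hasFDerivWithinAt
  have hpull := fun y (hy : y ∈ Ioo x₁ x₂ ×ˢ Ioo x₂ x₃) =>
    abs_det_mul_dirichletDensity_andersonMap h12 h23 α₁ α₂ α₃ hy
  have hinj := injOn_andersonMap h12 h23
  have himg := image_andersonMap h12 h23
  obtain ⟨hint, hval⟩ := integrableOn_and_integral_dirichletDensity hα₁ hα₂ hα₃
  rw [intervalIntegral_intervalIntegral_eq_setIntegral_prod h12.le h23.le,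
    ← setIntegral_eq_of_jacobian (g := (_ * dirichletDensity α₁ α₂ α₃ ·)) hS hderiv hinj himg
      hpull,
    integral_const_mul, hval, mul_comm]
  exact (integrableOn_iff_of_jacobian hS hderiv hinj himg hpull).1 (hint.const_mul _)
end

section
/- If Kadell's integral I_{λ;n}(α,β,γ) satisfies the recursion I_{λ;n}(α,β,γ) = I_{λ;n-1}(α+γ, β+γ, γ) · [Γ(α)Γ(β)/Γ(α+β+(n-1)γ)] · ∏_{i=1}^{n-1} Γ(λ_i+(n-i+1)γ)/Γ(λ_i+(n-i)γ), with λ a partition with λ_n = 0, and I_{0;1}(α,β,γ) = Γ(α)Γ(β)/Γ(α+β), then the closed-form product ∏_{1≤i<j≤n} Γ((j-i+1)γ+λ_i-λ_j)/Γ((j-i)γ+λ_i-λ_j) · ∏_{i=1}^n Γ(α+(n-i)γ+λ_i)Γ(β+(i-1)γ)/Γ(α+β+(2n-i-1)γ+λ_i) satisfies the same recursion and initial condition; i.e. this Gamma-product identity reduces the n-variable formula to the (n-1)-variable one. -/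
open Finset

/-- The Selberg–Kadell closed-form Gamma product, with the partition
`λ` indexed from `0`, so `λ_{i+1} = l i` for `0 ≤ i < n`. -/
noncomputable def kadellRHS (n : ℕ) (l : ℕ → ℕ) (α β γ : ℝ) : ℝ :=
  (∏ i ∈ Finset.range n, ∏ j ∈ Finset.Ioo i n,
      Real.Gamma (((j : ℝ) - i + 1) * γ + ((l i : ℝ) - l j)) /
        Real.Gamma (((j : ℝ) - i) * γ + ((l i : ℝ) - l j))) *
  ∏ i ∈ Finset.range n,
      Real.Gamma (α + ((n : ℝ) - 1 - i) * γ + l i) * Real.Gamma (β + i * γ) /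
        Real.Gamma (α + β + (2 * (n : ℝ) - i - 2) * γ + l i)

/-
Split the closed form into the factor over pairs `i < j`, which depends on `γ` and `λ` only,
and the factor over single indices. Passing from `n - 1` to `n` variables, the pair factor gains
the pairs `(i, n)`, which with `λ_n = 0` give the product over `i < n`; in the single-index factor
the shift `α, β ↦ α + γ, β + γ` re-indexes the first `n - 1` terms, and the `β`-terms telescope by
one step, leaving `Γ(α) Γ(β) / Γ(α + β + (n - 1) γ)`.
-/

lemma prod_range_succ_prod_Ioo {M : Type*} [CommMonoid M] (f : ℕ → ℕ → M) (m : ℕ) :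
    ∏ i ∈ range (m + 1), ∏ j ∈ Ioo i (m + 1), f i j =
      (∏ i ∈ range m, ∏ j ∈ Ioo i m, f i j) * ∏ i ∈ range m, f i m := by
  rw [prod_range_succ, Ioo_add_one_right_eq_Ioc m, Ioc_self, prod_empty, mul_one,
    ← prod_mul_distrib]
  refine prod_congr rfl fun i hi => ?_
  rw [Ioo_add_one_right_eq_Ioc, ← Ioo_insert_right (mem_range.mp hi),
    prod_insert right_notMem_Ioo, mul_comm]

noncomputable def kadellPairFactor (n : ℕ) (l : ℕ → ℕ) (γ : ℝ) : ℝ :=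
  ∏ i ∈ range n, ∏ j ∈ Ioo i n,
    Real.Gamma (((j : ℝ) - i + 1) * γ + ((l i : ℝ) - l j)) /
      Real.Gamma (((j : ℝ) - i) * γ + ((l i : ℝ) - l j))

noncomputable def kadellSingleFactor (n : ℕ) (l : ℕ → ℕ) (α β γ : ℝ) : ℝ :=
  ∏ i ∈ range n,
    Real.Gamma (α + ((n : ℝ) - 1 - i) * γ + l i) * Real.Gamma (β + i * γ) /
      Real.Gamma (α + β + (2 * (n : ℝ) - i - 2) * γ + l i)

lemma kadellRHS_eq_mul (n : ℕ) (l : ℕ → ℕ) (α β γ : ℝ) :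
    kadellRHS n l α β γ = kadellPairFactor n l γ * kadellSingleFactor n l α β γ :=
  rfl

lemma kadellPairFactor_eq_pred_mul {n : ℕ} {l : ℕ → ℕ} (γ : ℝ) (hl : l (n - 1) = 0) :
    kadellPairFactor n l γ = kadellPairFactor (n - 1) l γ *
      ∏ i ∈ range (n - 1),
        Real.Gamma ((l i : ℝ) + ((n : ℝ) - i) * γ) /
          Real.Gamma ((l i : ℝ) + ((n : ℝ) - 1 - i) * γ) := by
  cases n with
  | zero => simp [kadellPairFactor]
  | succ m =>
    rw [Nat.add_sub_cancel] at hl ⊢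
    rw [kadellPairFactor, kadellPairFactor, prod_range_succ_prod_Ioo]
    congr 1
    refine prod_congr rfl fun i _ => ?_
    rw [hl]
    push_cast
    ring_nf

lemma kadellSingleFactor_eq_pred_mul {n : ℕ} {l : ℕ → ℕ} (α β γ : ℝ) (hn : 0 < n)
    (hl : l (n - 1) = 0) :
    kadellSingleFactor n l α β γ = kadellSingleFactor (n - 1) l (α + γ) (β + γ) γ *
      (Real.Gamma α * Real.Gamma β / Real.Gamma (α + β + ((n : ℝ) - 1) * γ)) := by
  obtain ⟨m, rfl⟩ : ∃ m, n = m + 1 := Nat.exists_eq_add_one.mpr hn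
  rw [Nat.add_sub_cancel] at hl ⊢
  simp only [kadellSingleFactor, prod_div_distrib, prod_mul_distrib]
  have split_α : ∏ i ∈ range (m + 1), Real.Gamma (α + (((m + 1 : ℕ) : ℝ) - 1 - i) * γ + l i) =
      (∏ i ∈ range m, Real.Gamma (α + γ + ((m : ℝ) - 1 - i) * γ + l i)) * Real.Gamma α := by
    rw [prod_range_succ, hl]
    congr 1
    · exact prod_congr rfl fun i _ => by push_cast; ring_nf
    · push_cast; ring_nf
  have split_β : ∏ i ∈ range (m + 1), Real.Gamma (β + i * γ) =
      (∏ i ∈ range m, Real.Gamma (β + γ + i * γ)) * Real.Gamma β := by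
    rw [prod_range_succ']
    congr 1
    · exact prod_congr rfl fun i _ => by push_cast; ring_nf
    · simp
  have split_αβ : ∏ i ∈ range (m + 1),
        Real.Gamma (α + β + (2 * ((m + 1 : ℕ) : ℝ) - i - 2) * γ + l i) =
      (∏ i ∈ range m, Real.Gamma (α + γ + (β + γ) + (2 * (m : ℝ) - i - 2) * γ + l i)) *
        Real.Gamma (α + β + ((((m + 1 : ℕ) : ℝ)) - 1) * γ) := by
    rw [prod_range_succ, hl]
    congr 1
    · exact prod_congr rfl fun i _ => by push_cast; ring_nf
    · push_cast; ring_nf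
  rw [split_α, split_β, split_αβ]
  ring

theorem kadellRHS_recursion_and_initial_general (α β γ : ℝ) :
    (∀ l : ℕ → ℕ, l 0 = 0 → kadellRHS 1 l α β γ =
      Real.Gamma α * Real.Gamma β / Real.Gamma (α + β)) ∧
    (∀ n : ℕ, 2 ≤ n → ∀ l : ℕ → ℕ, (∀ i j, i ≤ j → l j ≤ l i) → l (n - 1) = 0 →
      kadellRHS n l α β γ =
        kadellRHS (n - 1) l (α + γ) (β + γ) γ *
          (Real.Gamma α * Real.Gamma β / Real.Gamma (α + β + ((n : ℝ) - 1) * γ)) *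
          ∏ i ∈ Finset.range (n - 1),
            Real.Gamma ((l i : ℝ) + ((n : ℝ) - i) * γ) /
              Real.Gamma ((l i : ℝ) + ((n : ℝ) - 1 - i) * γ)) := by
  refine ⟨fun l hl => ?_, fun n hn l _ hl => ?_⟩
  · rw [kadellRHS_eq_mul, kadellPairFactor_eq_pred_mul (n := 1) γ hl,
      kadellSingleFactor_eq_pred_mul (n := 1) α β γ one_pos hl]
    simp [kadellPairFactor, kadellSingleFactor]
  · rw [kadellRHS_eq_mul, kadellRHS_eq_mul, kadellPairFactor_eq_pred_mul γ hl,
      kadellSingleFactor_eq_pred_mul α β γ (by omega) hl]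
    ring

/-- The closed-form Gamma product satisfies the same recursion and initial
condition as Kadell's integral `I_{λ;n}(α,β,γ)`. -/
theorem kadellRHS_recursion_and_initial (α β γ : ℝ)
    (hα : 0 < α) (hβ : 0 < β) (hγ : 0 < γ) :
    (∀ l : ℕ → ℕ, l 0 = 0 → kadellRHS 1 l α β γ =
      Real.Gamma α * Real.Gamma β / Real.Gamma (α + β)) ∧
    (∀ n : ℕ, 2 ≤ n → ∀ l : ℕ → ℕ, (∀ i j, i ≤ j → l j ≤ l i) → l (n - 1) = 0 →
      kadellRHS n l α β γ =
        kadellRHS (n - 1) l (α + γ) (β + γ) γ *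
          (Real.Gamma α * Real.Gamma β / Real.Gamma (α + β + ((n : ℝ) - 1) * γ)) *
          ∏ i ∈ Finset.range (n - 1),
            Real.Gamma ((l i : ℝ) + ((n : ℝ) - i) * γ) /
              Real.Gamma ((l i : ℝ) + ((n : ℝ) - 1 - i) * γ)) :=
  kadellRHS_recursion_and_initial_general α β γ
end
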